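/- arXiv:1703.09453 — 4 statements merged into one kernel-verified Lean document; each statement's English description precedes it below -/
import Mathlib

section
/- Let θ'_1,…,θ'_N be i.i.d. uniform on the circle of circumference 2π, N ≥ 2, and 0 < δ < π/6. Let P(δ) be the probability that for all i ≠ j the circular included angle |θ'_{ij}| does not exceed π−2δ. Then P(δ) ≥ N·((π−2δ)/(2π))^{N−1} + (N−2)·((π−6δ)/(2π))^{N−1}. -/
open Real MeasureTheory Set

/-- Uniform probability measure on the interval [0, 2π]. -/
noncomputable def unifAngle : Measure ℝ :=
  (ENNReal.ofReal (1 / (2 * π))) • volume.restrict (Set.Icc 0 (2 * π))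

namespace Stmt8

lemma tp_pos : (0:ℝ) < 2 * π := by positivity

/-- the representative of `x - t` modulo `2π` in `[0, 2π)`. -/
noncomputable def toArc (t x : ℝ) : ℝ := 2 * π * Int.fract ((x - t) / (2 * π))

lemma toArc_mem (t x : ℝ) : toArc t x ∈ Ico 0 (2 * π) := by
  constructor
  · exact mul_nonneg tp_pos.le (Int.fract_nonneg _)
  · have h := Int.fract_lt_one ((x - t) / (2 * π))
    calc 2 * π * Int.fract ((x - t) / (2 * π)) < 2 * π * 1 := (mul_lt_mul_iff_right₀ tp_pos).2 h
      _ = 2 * π := by ring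

lemma toArc_spec (t x : ℝ) : ∃ m : ℤ, toArc t x = x - t + 2 * π * m := by
  refine ⟨-⌊(x - t) / (2 * π)⌋, ?_⟩
  have h2 : (2:ℝ) * π ≠ 0 := ne_of_gt tp_pos
  rw [toArc, Int.fract]
  push_cast
  field_simp
  ring

lemma toArc_eq_of {t x b : ℝ} (hb : b ∈ Ico 0 (2 * π)) (m : ℤ) (h : x - t = b + 2 * π * m) :
    toArc t x = b := by
  have h2 : (2:ℝ) * π ≠ 0 := ne_of_gt tp_pos
  have : (x - t) / (2 * π) = b / (2 * π) + m := by field_simp [h]; linarith [h]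
  have hb0 : (0:ℝ) ≤ b / (2 * π) := div_nonneg hb.1 tp_pos.le
  have hb1 : b / (2 * π) < 1 := (div_lt_one tp_pos).2 hb.2
  rw [toArc, this, Int.fract_add_intCast, Int.fract_eq_self.2 ⟨hb0, hb1⟩]
  field_simp

lemma measurable_toArc : Measurable (fun p : ℝ × ℝ => toArc p.1 p.2) := by
  unfold toArc
  exact (measurable_const.mul ((Measurable.sub measurable_snd measurable_fst).div_const _).fract)

lemma norm_le_of_rep {x d : ℝ} (hd : 0 ≤ d) (m : ℤ) (h : |x - 2 * π * m| ≤ d) :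
    ‖(x : AddCircle (2 * π))‖ ≤ d := by
  haveI : Fact (0 < 2 * π) := ⟨tp_pos⟩
  rw [AddCircle.norm_eq]
  set y := (2 * π)⁻¹ * x with hy
  have key : |y - round y| ≤ |y - m| := by
    rcases eq_or_ne (round y) m with hm | hm
    · rw [hm]
    · have h1 : |y - round y| ≤ 1/2 := abs_sub_round y
      have h2 : (1:ℝ) ≤ |(round y : ℝ) - m| := by
        have : round y - m ≠ 0 := sub_ne_zero.2 (by exact_mod_cast hm)
        calc (1:ℝ) = ((1:ℤ):ℝ) := by norm_num
          _ ≤ |((round y - m : ℤ) : ℝ)| := by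
              exact_mod_cast Int.one_le_abs (by exact_mod_cast this)
          _ = |(round y : ℝ) - m| := by push_cast; ring_nf
      have := abs_sub_abs_le_abs_sub ((y : ℝ) - m) (y - round y)
      have h3 : |(round y:ℝ) - m| ≤ |y - m| + |y - round y| := by
        calc |(round y:ℝ) - m| = |(y - m) - (y - round y)| := by ring_nf
          _ ≤ |y - m| + |y - round y| := abs_sub _ _
      linarith
  have h2π : (0:ℝ) < 2*π := tp_pos
  have hx : x = 2*π * y := by rw [hy]; field_simp
  calc |x - round ((2*π)⁻¹ * x) * (2*π)| = |2*π| * |y - round y| := by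
        rw [← abs_mul, ← hy]; congr 1; rw [hx]; ring
    _ = (2*π) * |y - round y| := by rw [abs_of_pos h2π]
    _ ≤ (2*π) * |y - m| := (mul_le_mul_iff_right₀ h2π).2 key
    _ = |2*π| * |y - m| := by rw [abs_of_pos h2π]
    _ = |x - 2*π*m| := by rw [← abs_mul]; congr 1; rw [hx]; ring
    _ ≤ d := h

/-- helper: from toArc difference data conclude circle-norm bound. -/
lemma norm_diff_le {t x x' d : ℝ} (hd : 0 ≤ d) (j : ℤ)
    (h : |toArc t x - toArc t x' - 2 * π * j| ≤ d) :
    ‖((x - x' : ℝ) : AddCircle (2 * π))‖ ≤ d := by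
  obtain ⟨m, hm⟩ := toArc_spec t x
  obtain ⟨m', hm'⟩ := toArc_spec t x'
  refine norm_le_of_rep hd (m' - m + j) ?_
  have heq : x - x' - ((m' : ℝ) - m + j) * (2 * π) = toArc t x - toArc t x' - 2 * π * j := by
    rw [hm, hm']; push_cast; ring
  push_cast
  rw [show x - x' - 2 * π * ((m' : ℝ) - ↑m + ↑j) = x - x' - ((m' : ℝ) - m + j) * (2 * π) by ring,
    heq]
  exact h

lemma toArc_self (t : ℝ) : toArc t t = 0 :=
  toArc_eq_of ⟨le_refl 0, tp_pos⟩ 0 (by ring)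

lemma toArc_anti {t x : ℝ} (h : toArc t x ≠ 0) : toArc x t = 2 * π - toArc t x := by
  obtain ⟨m, hm⟩ := toArc_spec t x
  have hmem := toArc_mem t x
  refine toArc_eq_of ⟨?_, ?_⟩ (m - 1) ?_
  · linarith [hmem.2]
  · rcases lt_or_eq_of_le hmem.1 with h' | h'
    · linarith
    · exact absurd h'.symm h
  · rw [hm]; push_cast; ring

lemma toArc_diff {t x x' b : ℝ} (hb : b ∈ Ico 0 (2 * π)) (j : ℤ)
    (h : toArc t x - toArc t x' = b + 2 * π * j) : toArc x' x = b := by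
  obtain ⟨m, hm⟩ := toArc_spec t x
  obtain ⟨m', hm'⟩ := toArc_spec t x'
  refine toArc_eq_of hb (j + m' - m) ?_
  have : x - x' = toArc t x - toArc t x' + 2 * π * ((m' : ℝ) - m) := by
    rw [hm, hm']; push_cast; ring
  rw [this, h]; push_cast; ring

lemma unifAngle_apply {A : Set ℝ} (hA : MeasurableSet A) :
    unifAngle A = ENNReal.ofReal (1 / (2 * π)) * volume (A ∩ Ico 0 (2 * π)) := by
  rw [unifAngle, Measure.smul_apply, Measure.restrict_apply hA, smul_eq_mul]
  congr 1
  apply le_antisymm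
  · have hsub : A ∩ Icc 0 (2*π) ⊆ (A ∩ Ico 0 (2*π)) ∪ {(2*π : ℝ)} := by
      rintro x ⟨hxA, hx0, hx2⟩
      rcases lt_or_eq_of_le hx2 with h | h
      · exact Or.inl ⟨hxA, hx0, h⟩
      · exact Or.inr (by simp [h])
    calc volume (A ∩ Icc 0 (2*π)) ≤ volume ((A ∩ Ico 0 (2*π)) ∪ {(2*π:ℝ)}) := measure_mono hsub
      _ ≤ volume (A ∩ Ico 0 (2*π)) + volume {(2*π:ℝ)} := measure_union_le _ _
      _ = volume (A ∩ Ico 0 (2*π)) := by simp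
  · exact measure_mono (inter_subset_inter_right _ Ico_subset_Icc_self)

instance : IsProbabilityMeasure unifAngle := by
  constructor
  rw [unifAngle_apply MeasurableSet.univ, univ_inter, Real.volume_Ico,
    ← ENNReal.ofReal_mul (by positivity)]
  rw [show 1 / (2*π) * (2*π - 0) = 1 by field_simp; ring, ENNReal.ofReal_one]
lemma measurable_toArc_right (t : ℝ) : Measurable (toArc t) :=
  measurable_toArc.comp (measurable_const.prodMk measurable_id)

lemma measurePreserving_toArc {t : ℝ} (ht : t ∈ Ico 0 (2 * π)) :
    MeasurePreserving (toArc t) unifAngle unifAngle := by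
  have ht1 := ht.1
  have ht2 := ht.2
  refine ⟨measurable_toArc_right t, ?_⟩
  ext T hT
  rw [Measure.map_apply (measurable_toArc_right t) hT]
  set T' := T ∩ Ico 0 (2 * π) with hT'
  have hT'm : MeasurableSet T' := hT.inter measurableSet_Ico
  have harc1 : ∀ x : ℝ, 0 ≤ x → x < t → toArc t x = x + (2 * π - t) := by
    intro x h0 hlt
    apply toArc_eq_of (b := x + (2*π - t)) ⟨by linarith, by linarith⟩ (-1)
    push_cast; ring
  have harc2 : ∀ x : ℝ, t ≤ x → x < 2 * π → toArc t x = x + (-t) := by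
    intro x h0 hlt
    apply toArc_eq_of (b := x + (-t)) ⟨by linarith, by linarith⟩ 0
    push_cast; ring
  have key : (toArc t ⁻¹' T) ∩ Ico 0 (2 * π) =
      ((fun x => x + (2 * π - t)) ⁻¹' (T' ∩ Ico (2 * π - t) (2 * π))) ∪
      ((fun x => x + (-t)) ⁻¹' (T' ∩ Ico 0 (2 * π - t))) := by
    ext x
    simp only [mem_inter_iff, mem_preimage, mem_union, mem_Ico, hT']
    constructor
    · rintro ⟨hxT, hx0, hx2⟩
      rcases lt_or_ge x t with h | h
      · left
        rw [harc1 x hx0 h] at hxT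
        have hm := toArc_mem t x
        rw [harc1 x hx0 h] at hm
        exact ⟨⟨hxT, hm⟩, by linarith, by linarith⟩
      · right
        rw [harc2 x h hx2] at hxT
        have hm := toArc_mem t x
        rw [harc2 x h hx2] at hm
        exact ⟨⟨hxT, hm⟩, by linarith [hm.1], by linarith⟩
    · rintro (⟨⟨hmem, _⟩, hlo, hhi⟩ | ⟨⟨hmem, _⟩, hlo, hhi⟩)
      · have hx0 : 0 ≤ x := by linarith
        have hxt : x < t := by linarith
        rw [harc1 x hx0 hxt]
        exact ⟨hmem, hx0, by linarith⟩
      · have hxt : t ≤ x := by linarith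
        rw [harc2 x hxt (by linarith)]
        exact ⟨hmem, by linarith, by linarith⟩
  have hdisj : Disjoint ((fun x => x + (2 * π - t)) ⁻¹' (T' ∩ Ico (2 * π - t) (2 * π)))
      ((fun x => x + (-t)) ⁻¹' (T' ∩ Ico 0 (2 * π - t))) := by
    rw [disjoint_left]
    rintro x ⟨_, h1, _⟩ ⟨_, _, h2⟩
    simp only [mem_Ico] at *
    linarith
  have hm1 : MeasurableSet ((fun x : ℝ => x + (2 * π - t)) ⁻¹' (T' ∩ Ico (2 * π - t) (2 * π))) :=
    (measurable_add_const _) (hT'm.inter measurableSet_Ico)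
  have hm2 : MeasurableSet ((fun x : ℝ => x + (-t)) ⁻¹' (T' ∩ Ico 0 (2 * π - t))) :=
    (measurable_add_const _) (hT'm.inter measurableSet_Ico)
  rw [unifAngle_apply ((measurable_toArc_right t) hT), unifAngle_apply hT, key,
    measure_union hdisj hm2, measure_preimage_add_right, measure_preimage_add_right]
  congr 1
  have hsplit : T' ∩ Ico 0 (2 * π - t) ∪ T' ∩ Ico (2 * π - t) (2 * π) = T' ∩ Ico 0 (2*π) := by
    rw [← inter_union_distrib_left]
    congr 1
    rw [Ico_union_Ico_eq_Ico (by linarith) (by linarith)]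
  have hdisj2 : Disjoint (T' ∩ Ico 0 (2 * π - t)) (T' ∩ Ico (2 * π - t) (2 * π)) := by
    rw [disjoint_left]
    rintro x ⟨_, _, h1⟩ ⟨_, h2, _⟩
    linarith
  have hTsub : T' ∩ Ico 0 (2 * π) = T' := by
    rw [hT']; ext x; simp only [mem_inter_iff, mem_Ico]; tauto
  calc volume (T' ∩ Ico (2*π - t) (2*π)) + volume (T' ∩ Ico 0 (2*π - t))
      = volume (T' ∩ Ico 0 (2*π - t)) + volume (T' ∩ Ico (2*π - t) (2*π)) := by ring
    _ = volume (T' ∩ Ico 0 (2*π - t) ∪ T' ∩ Ico (2*π - t) (2*π)) :=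
        (measure_union hdisj2 (hT'm.inter measurableSet_Ico)).symm
    _ = volume (T' ∩ Ico 0 (2 * π)) := by rw [hsplit]
    _ = volume T' := by rw [hTsub]
    _ = volume (T ∩ Ico 0 (2 * π)) := by rw [hT']

lemma measurePreserving_pi_toArc {n : ℕ} {t : ℝ} (ht : t ∈ Ico 0 (2 * π)) :
    MeasurePreserving (fun (y : Fin n → ℝ) (j : Fin n) => toArc t (y j))
      (Measure.pi fun _ => unifAngle) (Measure.pi fun _ => unifAngle) := by
  have hg := measurePreserving_toArc ht
  have hmeas : Measurable (fun (y : Fin n → ℝ) (j : Fin n) => toArc t (y j)) :=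
    measurable_pi_lambda _ fun j => hg.measurable.comp (measurable_pi_apply j)
  refine ⟨hmeas, ?_⟩
  refine (Measure.pi_eq fun s hs => ?_).symm
  rw [Measure.map_apply hmeas (MeasurableSet.univ_pi hs)]
  have hpre : (fun (y : Fin n → ℝ) (j : Fin n) => toArc t (y j)) ⁻¹' (univ.pi s)
      = univ.pi (fun j => toArc t ⁻¹' (s j)) := by
    ext y; simp [Set.mem_univ_pi]
  rw [hpre, Measure.pi_pi]
  exact Finset.prod_congr rfl fun j _ => hg.measure_preimage (hs j).nullMeasurableSet

lemma pi_unifAngle_eq (m : ℕ) :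
    (Measure.pi fun _ : Fin m => unifAngle) =
      (ENNReal.ofReal (1 / (2 * π)))^m •
        ((volume : Measure (Fin m → ℝ)).restrict (univ.pi fun _ => Ico 0 (2 * π))) := by
  refine Measure.pi_eq fun s hs => ?_
  rw [Measure.smul_apply, Measure.restrict_apply (MeasurableSet.univ_pi hs), smul_eq_mul,
    ← Set.pi_inter_distrib, volume_pi_pi]
  have : ∀ i : Fin m, unifAngle (s i) = ENNReal.ofReal (1 / (2 * π)) * volume (s i ∩ Ico 0 (2*π)) :=
    fun i => unifAngle_apply (hs i)
  rw [Finset.prod_congr rfl (fun i _ => this i), Finset.prod_mul_distrib,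
    Finset.prod_const, Finset.card_univ, Fintype.card_fin]

lemma pi_unifAngle_apply_of_subset {m : ℕ} {W : Set (Fin m → ℝ)} (hW : MeasurableSet W)
    (hsub : W ⊆ univ.pi fun _ => Ico 0 (2 * π)) :
    (Measure.pi fun _ : Fin m => unifAngle) W = (ENNReal.ofReal (1 / (2 * π)))^m * volume W := by
  rw [pi_unifAngle_eq, Measure.smul_apply, Measure.restrict_apply hW, smul_eq_mul,
    inter_eq_self_of_subset_left hsub]

lemma volume_preimage_sub_const {m : ℕ} (c : Fin m → ℝ) (W : Set (Fin m → ℝ)) :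
    volume ((fun y => y - c) ⁻¹' W) = volume W := by
  have : (fun y : Fin m → ℝ => y - c) = (fun y => y + (-c)) := by funext y; ring
  rw [this, measure_preimage_add_right]
lemma ae_mem_Ico : ∀ᵐ t ∂unifAngle, t ∈ Ico 0 (2 * π) := by
  rw [ae_iff]
  have : {t : ℝ | ¬ t ∈ Ico 0 (2*π)} = (Ico 0 (2*π))ᶜ := rfl
  rw [this, unifAngle_apply measurableSet_Ico.compl, compl_inter_self, measure_empty, mul_zero]

lemma measure_anchored {n : ℕ} (i : Fin (n+1)) {D : Set (Fin n → ℝ)} (hD : MeasurableSet D)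
    (hsub : D ⊆ univ.pi fun _ => Ico 0 (2 * π)) :
    (Measure.pi fun _ : Fin (n+1) => unifAngle)
      {θ : Fin (n+1) → ℝ | (fun j => toArc (θ i) (θ (i.succAbove j))) ∈ D}
    = (ENNReal.ofReal (1 / (2 * π)))^n * volume D := by
  set e := MeasurableEquiv.piFinSuccAbove (fun _ : Fin (n+1) => ℝ) i with he
  have hmp := measurePreserving_piFinSuccAbove (fun _ : Fin (n+1) => unifAngle) i
  set T : Set (ℝ × (Fin n → ℝ)) := {p | (fun j => toArc p.1 (p.2 j)) ∈ D} with hTdef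
  have hFmeas : Measurable (fun p : ℝ × (Fin n → ℝ) => (fun j => toArc p.1 (p.2 j))) := by
    apply measurable_pi_lambda
    intro j
    exact measurable_toArc.comp (measurable_fst.prodMk ((measurable_pi_apply j).comp measurable_snd))
  have hT : MeasurableSet T := hFmeas hD
  have hset : {θ : Fin (n+1) → ℝ | (fun j => toArc (θ i) (θ (i.succAbove j))) ∈ D} = e ⁻¹' T := by
    ext θ
    simp only [mem_setOf_eq, mem_preimage, hTdef, he, MeasurableEquiv.piFinSuccAbove_apply]
    rfl
  rw [hset, hmp.measure_preimage hT.nullMeasurableSet, Measure.prod_apply hT]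
  have hsec : ∀ᵐ t ∂unifAngle,
      (Measure.pi fun _ : Fin n => unifAngle) (Prod.mk t ⁻¹' T)
        = (ENNReal.ofReal (1 / (2 * π)))^n * volume D := by
    filter_upwards [ae_mem_Ico] with t ht
    have : (Prod.mk t ⁻¹' T) = (fun (y : Fin n → ℝ) (j : Fin n) => toArc t (y j)) ⁻¹' D := rfl
    rw [this, (measurePreserving_pi_toArc ht).measure_preimage hD.nullMeasurableSet,
      pi_unifAngle_apply_of_subset hD hsub]
  rw [lintegral_congr_ae hsec, lintegral_const, measure_univ, mul_one]
variable {n : ℕ}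

/-- The ordered box piece with "far" set `S`. -/
def PiS (s : ℝ) (S : Finset (Fin n)) : Set (Fin n → ℝ) :=
  {v | (∀ j, v j ∈ Ico 0 s) ∧ ∀ i ∈ S, ∀ j, j ∉ S → v i < v j}

lemma measurable_PiS (s : ℝ) (S : Finset (Fin n)) : MeasurableSet (PiS s S) := by
  have heq : PiS s S = (univ.pi fun _ : Fin n => Ico 0 s) ∩
      ⋂ i ∈ S, ⋂ j ∈ (Sᶜ : Finset (Fin n)), {v : Fin n → ℝ | v i < v j} := by
    ext v
    simp only [PiS, Set.mem_inter_iff, Set.mem_univ_pi, Set.mem_setOf_eq, Set.mem_iInter,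
      Finset.mem_compl]
  rw [heq]
  exact (MeasurableSet.univ_pi fun _ => measurableSet_Ico).inter
    (MeasurableSet.biInter (Set.to_countable _) fun i _ =>
      MeasurableSet.biInter (Set.to_countable _) fun j _ =>
        measurableSet_lt (measurable_pi_apply i) (measurable_pi_apply j))

lemma PiS_disjoint {s : ℝ} {S S' : Finset (Fin n)} (hcard : S.card = S'.card) (hne : S ≠ S') :
    Disjoint (PiS s S) (PiS s S') := by
  have h1 : (S \ S').Nonempty := by
    rw [Finset.sdiff_nonempty]
    intro hsub
    exact hne (Finset.eq_of_subset_of_card_le hsub (le_of_eq hcard.symm))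
  have h2 : (S' \ S).Nonempty := by
    rw [Finset.sdiff_nonempty]
    intro hsub
    exact hne (Finset.eq_of_subset_of_card_le hsub (le_of_eq hcard)).symm
  obtain ⟨i, hi⟩ := h1
  obtain ⟨j, hj⟩ := h2
  rw [Finset.mem_sdiff] at hi hj
  rw [Set.disjoint_left]
  rintro v ⟨_, hord⟩ ⟨_, hord'⟩
  exact absurd (hord i hi.1 j hj.2) (not_lt.2 (hord' j hj.1 i hi.2).le)

lemma PiS_cover {s : ℝ} {m : ℕ} (hm : m ≤ n) {v : Fin n → ℝ} (hbox : ∀ j, v j ∈ Ico 0 s)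
    (hinj : Function.Injective v) : ∃ S : Finset (Fin n), S.card = m ∧ v ∈ PiS s S := by
  set σ := Tuple.sort v with hσ
  have hmono : Monotone (v ∘ σ) := Tuple.monotone_sort v
  have hsm : StrictMono (v ∘ σ) := hmono.strictMono_of_injective (hinj.comp σ.injective)
  refine ⟨Finset.image (fun l : Fin m => σ (Fin.castLE hm l)) Finset.univ, ?_, hbox, ?_⟩
  · have hinj2 : Function.Injective (fun l : Fin m => σ (Fin.castLE hm l)) :=
      fun a b hab => (Fin.castLE_injective hm) (σ.injective hab)
    rw [Finset.card_image_of_injective _ hinj2, Finset.card_univ, Fintype.card_fin]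
  · intro i hi j hj
    simp only [Finset.mem_image, Finset.mem_univ, true_and] at hi hj
    obtain ⟨l, rfl⟩ := hi
    push_neg at hj
    have hjval : m ≤ ((σ.symm j : Fin n) : ℕ) := by
      by_contra hc
      push_neg at hc
      refine hj ⟨(σ.symm j : Fin n).val, hc⟩ ?_
      have hcast : Fin.castLE hm ⟨(σ.symm j : Fin n).val, hc⟩ = σ.symm j := by
        apply Fin.ext; rfl
      rw [hcast, Equiv.apply_symm_apply]
    have hlt : (Fin.castLE hm l) < σ.symm j := by
      rw [Fin.lt_def]
      calc ((Fin.castLE hm l : Fin n) : ℕ) = (l : ℕ) := rfl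
        _ < m := l.isLt
        _ ≤ _ := hjval
    have := hsm hlt
    simpa using this

lemma volume_noninjective : volume {v : Fin n → ℝ | ¬ Function.Injective v} = 0 := by
  have hsub : {v : Fin n → ℝ | ¬ Function.Injective v} ⊆
      ⋃ p : Fin n × Fin n, {v : Fin n → ℝ | p.1 ≠ p.2 ∧ v p.1 = v p.2} := by
    intro v hv
    simp only [Function.Injective, not_forall] at hv
    obtain ⟨a, b, hab, hne⟩ := hv
    exact Set.mem_iUnion.2 ⟨(a, b), hne, hab⟩
  refine measure_mono_null hsub (measure_iUnion_null fun p => ?_)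
  rcases eq_or_ne p.1 p.2 with h | h
  · rw [show {v : Fin n → ℝ | p.1 ≠ p.2 ∧ v p.1 = v p.2} = (∅ : Set (Fin n → ℝ)) from by
      ext v; simp [h]]
    exact measure_empty
  · set L : (Fin n → ℝ) →ₗ[ℝ] ℝ := (LinearMap.proj p.1 : (Fin n → ℝ) →ₗ[ℝ] ℝ) - LinearMap.proj p.2 with hL
    have hker : {v : Fin n → ℝ | p.1 ≠ p.2 ∧ v p.1 = v p.2} ⊆ (LinearMap.ker L : Set (Fin n → ℝ)) := by
      rintro v ⟨_, hv⟩
      have happ : L v = v p.1 - v p.2 := rfl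
      simp only [SetLike.mem_coe, LinearMap.mem_ker, happ, hv, sub_self]
    refine measure_mono_null hker ?_
    apply Measure.addHaar_submodule
    intro htop
    have hmem : (Pi.single p.1 1 : Fin n → ℝ) ∈ LinearMap.ker L := by
      rw [htop]; trivial
    have happ : L (Pi.single p.1 1 : Fin n → ℝ)
        = (Pi.single p.1 1 : Fin n → ℝ) p.1 - (Pi.single p.1 1 : Fin n → ℝ) p.2 := rfl
    rw [LinearMap.mem_ker, happ, Pi.single_eq_same, Pi.single_eq_of_ne (Ne.symm h)] at hmem
    norm_num at hmem

lemma sum_volume_PiS {s : ℝ} (hs : 0 ≤ s) {m : ℕ} (hm : m ≤ n) :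
    ∑ S ∈ Finset.powersetCard m (Finset.univ : Finset (Fin n)), volume (PiS s S)
      = (ENNReal.ofReal s) ^ n := by
  have hdisj : (Finset.powersetCard m (Finset.univ : Finset (Fin n)) : Set (Finset (Fin n))).PairwiseDisjoint
      (fun S => PiS s S) := by
    intro S hS S' hS' hne
    rw [Finset.mem_coe, Finset.mem_powersetCard_univ] at hS
    rw [Finset.mem_coe, Finset.mem_powersetCard_univ] at hS'
    exact PiS_disjoint (by rw [hS, hS']) hne
  rw [← measure_biUnion_finset hdisj (fun S _ => measurable_PiS s S)]
  have hbox : volume (univ.pi fun _ : Fin n => Ico 0 s) = (ENNReal.ofReal s) ^ n := by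
    rw [volume_pi_pi]
    simp [Real.volume_Ico]
  apply le_antisymm
  · rw [← hbox]
    apply measure_mono
    apply Set.iUnion₂_subset
    intro S _
    intro v hv
    exact Set.mem_univ_pi.2 hv.1
  · rw [← hbox]
    calc volume (univ.pi fun _ : Fin n => Ico 0 s)
        ≤ volume ((⋃ S ∈ Finset.powersetCard m (Finset.univ : Finset (Fin n)), PiS s S)
            ∪ {v : Fin n → ℝ | ¬ Function.Injective v}) := by
          apply measure_mono
          intro v hv
          rw [Set.mem_univ_pi] at hv
          by_cases hinj : Function.Injective v
          · obtain ⟨S, hScard, hSmem⟩ := PiS_cover hm hv hinj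
            exact Or.inl (Set.mem_biUnion (Finset.mem_powersetCard_univ.2 hScard) hSmem)
          · exact Or.inr hinj
      _ ≤ volume (⋃ S ∈ Finset.powersetCard m (Finset.univ : Finset (Fin n)), PiS s S)
            + volume {v : Fin n → ℝ | ¬ Function.Injective v} := measure_union_le _ _
      _ = volume (⋃ S ∈ Finset.powersetCard m (Finset.univ : Finset (Fin n)), PiS s S) := by
          rw [volume_noninjective, add_zero]
section Events
variable (δ : ℝ) {n : ℕ}

/-- the event that all points lie in the half-open arc `(θ i, θ i + (π - 2δ))`. -/
def AEvt (i : Fin (n+1)) : Set (Fin (n+1) → ℝ) :=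
  {θ | ∀ j : Fin n, toArc (θ i) (θ (i.succAbove j)) ∈ Ioo 0 (π - 2*δ)}

/-- relative coordinate of the `j`-th non-anchor point. -/
noncomputable def wv (θ : Fin (n+1) → ℝ) (j : Fin n) : ℝ := toArc (θ 0) (θ j.succ)

/-- the wrap-around event with far-set `S`. -/
def PsiEvt (S : Finset (Fin n)) : Set (Fin (n+1) → ℝ) :=
  {θ | (∀ j, j ∉ S → wv θ j ∈ Ico (4*δ) (4*δ + (π - 6*δ))) ∧
       (∀ j, j ∈ S → wv θ j ∈ Ico (π + 2*δ) (π + 2*δ + (π - 6*δ))) ∧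
       (∀ i ∈ S, ∀ j, j ∉ S → wv θ i - (π + 2*δ) < wv θ j - 4*δ)}



/-- the offset vector for the wrap-around events. -/
noncomputable def cS (S : Finset (Fin n)) : Fin n → ℝ := fun j => if j ∈ S then π + 2*δ else 4*δ

variable {δ} (hδ1 : 0 < δ) (hδ2 : δ < π / 6)

lemma AEvt_spec {i : Fin (n+1)} {θ} (hθ : θ ∈ AEvt δ i) {l : Fin (n+1)} (hl : l ≠ i) :
    toArc (θ i) (θ l) ∈ Ioo 0 (π - 2*δ) := by
  obtain ⟨k, rfl⟩ := Fin.exists_succAbove_eq hl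
  exact hθ k


lemma anchorMap_measurable {i : Fin (n+1)} :
    Measurable (fun (θ : Fin (n+1) → ℝ) (j : Fin n) => toArc (θ i) (θ (i.succAbove j))) := by
  apply measurable_pi_lambda
  intro j
  have heq : (fun (θ : Fin (n+1) → ℝ) => toArc (θ i) (θ (i.succAbove j)))
      = (fun p : ℝ × ℝ => toArc p.1 p.2) ∘ (fun θ => (θ i, θ (i.succAbove j))) := rfl
  rw [heq]
  exact measurable_toArc.comp ((measurable_pi_apply i).prodMk (measurable_pi_apply _))

lemma AEvt_eq_anchored (i : Fin (n+1)) :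
    AEvt δ i = {θ : Fin (n+1) → ℝ |
      (fun j => toArc (θ i) (θ (i.succAbove j))) ∈ univ.pi fun _ : Fin n => Ioo 0 (π - 2*δ)} := by
  ext θ; simp [AEvt, Set.mem_univ_pi]

lemma PsiEvt_eq_anchored (S : Finset (Fin n)) :
    PsiEvt δ S = {θ : Fin (n+1) → ℝ |
      (fun j => toArc (θ (0 : Fin (n+1))) (θ ((0 : Fin (n+1)).succAbove j)))
        ∈ (fun y => y - cS δ S) ⁻¹' (PiS (π - 6*δ) S)} := by
  ext θ
  simp only [PsiEvt, mem_setOf_eq, mem_preimage, PiS, wv, Fin.succAbove_zero, cS,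
    Pi.sub_apply, mem_Ico, mem_setOf_eq]
  constructor
  · rintro ⟨hnear, hfar, hord⟩
    refine ⟨fun j => ?_, fun i hi j hj => ?_⟩
    · by_cases hj : j ∈ S
      · have := hfar j hj; rw [if_pos hj]; constructor <;> linarith [this.1, this.2]
      · have := hnear j hj; rw [if_neg hj]; constructor <;> linarith [this.1, this.2]
    · rw [if_pos hi, if_neg hj]; linarith [hord i hi j hj]
  · rintro ⟨hbox, hord⟩
    refine ⟨fun j hj => ?_, fun j hj => ?_, fun i hi j hj => ?_⟩
    · have := hbox j; rw [if_neg hj] at this; constructor <;> linarith [this.1, this.2]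
    · have := hbox j; rw [if_pos hj] at this; constructor <;> linarith [this.1, this.2]
    · have := hord i hi j hj; rw [if_pos hi, if_neg hj] at this; linarith

lemma measurable_AEvt (i : Fin (n+1)) : MeasurableSet (AEvt δ i) := by
  rw [AEvt_eq_anchored]
  exact anchorMap_measurable (MeasurableSet.univ_pi fun _ => measurableSet_Ioo)

lemma measurable_PsiEvt (S : Finset (Fin n)) : MeasurableSet (PsiEvt δ S) := by
  rw [PsiEvt_eq_anchored]
  apply anchorMap_measurable
  exact (measurable_pi_lambda _ fun j => (measurable_pi_apply j).sub_const _)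
    (measurable_PiS _ S)


include hδ1 hδ2


lemma dpos : (0:ℝ) < π - 2*δ := by
  have := pi_pos; linarith

lemma AEvt_subset_E (i : Fin (n+1)) :
    AEvt δ i ⊆ {θ : Fin (n+1) → ℝ | ∀ a b, a ≠ b →
      ‖((θ a - θ b : ℝ) : AddCircle (2 * π))‖ ≤ π - 2 * δ} := by
  have hd : (0:ℝ) ≤ π - 2*δ := (dpos hδ1 hδ2).le
  intro θ hθ a b hab
  rcases eq_or_ne a i with rfl | ha
  · -- a is the anchor
    have hb := AEvt_spec hθ (show b ≠ a from hab.symm)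
    refine norm_diff_le (t := θ a) hd 0 ?_
    rw [toArc_self]
    push_cast
    rw [abs_of_nonpos (by linarith [hb.1])]
    linarith [hb.2]
  · rcases eq_or_ne b i with rfl | hb
    · have ha' := AEvt_spec hθ ha
      refine norm_diff_le (t := θ b) hd 0 ?_
      rw [toArc_self]
      push_cast
      rw [abs_of_nonneg (by linarith [ha'.1])]
      linarith [ha'.2]
    · have ha' := AEvt_spec hθ ha
      have hb' := AEvt_spec hθ hb
      refine norm_diff_le (t := θ i) hd 0 ?_
      push_cast
      rw [abs_sub_le_iff]
      constructor <;> [skip; skip] <;>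
        simp only [mul_zero, sub_zero] <;>
        [linarith [ha'.2, hb'.1]; linarith [hb'.2, ha'.1]]

lemma PsiEvt_subset_E {S : Finset (Fin n)} (hS0 : S ≠ ∅) (hSu : S ≠ Finset.univ) :
    PsiEvt δ S ⊆ {θ : Fin (n+1) → ℝ | ∀ a b, a ≠ b →
      ‖((θ a - θ b : ℝ) : AddCircle (2 * π))‖ ≤ π - 2 * δ} := by
  have hπ := pi_pos
  have hd : (0:ℝ) ≤ π - 2*δ := (dpos hδ1 hδ2).le
  rintro θ ⟨hnear, hfar, hord⟩ a b hab
  simp only [wv] at hnear hfar hord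
  -- helper to compute the bound for an ordered pair (x, y) = (θ a, θ b)
  have key : ∀ l : Fin n, ‖((θ 0 - θ l.succ : ℝ) : AddCircle (2*π))‖ ≤ π - 2*δ ∧
      ‖((θ l.succ - θ 0 : ℝ) : AddCircle (2*π))‖ ≤ π - 2*δ := by
    intro l
    by_cases hl : l ∈ S
    · have h := hfar l hl
      constructor
      · refine norm_diff_le (t := θ 0) hd (-1) ?_
        rw [toArc_self]
        push_cast
        rw [abs_of_nonneg (by linarith [h.2])]
        linarith [h.1]
      · refine norm_diff_le (t := θ 0) hd 1 ?_
        rw [toArc_self]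
        push_cast
        rw [abs_of_nonpos (by linarith [h.2])]
        linarith [h.1]
    · have h := hnear l hl
      constructor
      · refine norm_diff_le (t := θ 0) hd 0 ?_
        rw [toArc_self]
        push_cast
        rw [abs_of_nonpos (by linarith [h.1])]
        linarith [h.2]
      · refine norm_diff_le (t := θ 0) hd 0 ?_
        rw [toArc_self]
        push_cast
        rw [abs_of_nonneg (by linarith [h.1])]
        linarith [h.2]
  have keypair : ∀ l l' : Fin n, ‖((θ l.succ - θ l'.succ : ℝ) : AddCircle (2*π))‖ ≤ π - 2*δ := by
    intro l l'
    rcases eq_or_ne l l' with rfl | hne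
    · simp only [sub_self]
      have : ((0 : ℝ) : AddCircle (2*π)) = 0 := by norm_cast
      rw [this, norm_zero]; exact hd
    by_cases hl : l ∈ S <;> by_cases hl' : l' ∈ S
    · have h := hfar l hl; have h' := hfar l' hl'
      refine norm_diff_le (t := θ 0) hd 0 ?_
      push_cast
      rw [mul_zero, sub_zero, abs_sub_le_iff]
      constructor <;> [linarith [h.2, h'.1]; linarith [h'.2, h.1]]
    · -- l far, l' near
      have h := hfar l hl; have h' := hnear l' hl'
      have ho := hord l hl l' hl'
      refine norm_diff_le (t := θ 0) hd 0 ?_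
      push_cast
      rw [mul_zero, sub_zero, abs_sub_le_iff]
      constructor
      · linarith
      · linarith [h.1, h'.2]
    · -- l near, l' far
      have h := hnear l hl; have h' := hfar l' hl'
      have ho := hord l' hl' l hl
      refine norm_diff_le (t := θ 0) hd 0 ?_
      push_cast
      rw [mul_zero, sub_zero, abs_sub_le_iff]
      constructor
      · linarith [h.2, h'.1]
      · linarith
    · have h := hnear l hl; have h' := hnear l' hl'
      refine norm_diff_le (t := θ 0) hd 0 ?_
      push_cast
      rw [mul_zero, sub_zero, abs_sub_le_iff]
      constructor <;> [linarith [h.2, h'.1]; linarith [h'.2, h.1]]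
  rcases eq_or_ne a 0 with rfl | ha
  · obtain ⟨l, rfl⟩ : ∃ l : Fin n, l.succ = b := by
      obtain ⟨k, hk⟩ := Fin.exists_succAbove_eq (show b ≠ (0 : Fin (n+1)) from hab.symm)
      exact ⟨k, by rw [← hk, Fin.succAbove_zero]⟩
    exact (key l).1
  · obtain ⟨l, rfl⟩ : ∃ l : Fin n, l.succ = a := by
      obtain ⟨k, hk⟩ := Fin.exists_succAbove_eq ha
      exact ⟨k, by rw [← hk, Fin.succAbove_zero]⟩
    rcases eq_or_ne b 0 with rfl | hb
    · exact (key l).2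
    · obtain ⟨l', rfl⟩ : ∃ l' : Fin n, l'.succ = b := by
        obtain ⟨k, hk⟩ := Fin.exists_succAbove_eq hb
        exact ⟨k, by rw [← hk, Fin.succAbove_zero]⟩
      exact keypair l l'

lemma AEvt_disj {i i' : Fin (n+1)} (h : i ≠ i') : Disjoint (AEvt δ i) (AEvt δ i') := by
  have hπ := pi_pos
  rw [Set.disjoint_left]
  intro θ hθ hθ'
  have h1 := AEvt_spec hθ (show i' ≠ i from h.symm)
  have h2 := AEvt_spec hθ' h
  have := toArc_anti (ne_of_gt h1.1)
  rw [this] at h2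
  have := h2.2
  linarith [h1.2]

lemma AEvt_Psi_disj (i : Fin (n+1)) {S : Finset (Fin n)} (hS0 : S.Nonempty)
    (hSu : S ≠ Finset.univ) : Disjoint (AEvt δ i) (PsiEvt δ S) := by
  have hπ := pi_pos
  rw [Set.disjoint_left]
  rintro θ hθ ⟨hnear, hfar, hord⟩
  simp only [wv] at hnear hfar hord
  obtain ⟨jS, hjS⟩ := hS0
  obtain ⟨jc, hjc⟩ : ∃ j, j ∉ S := by
    by_contra hc
    push_neg at hc
    exact hSu (Finset.eq_univ_iff_forall.2 hc)
  rcases eq_or_ne i 0 with rfl | hi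
  · have h1 := AEvt_spec hθ (show jS.succ ≠ (0 : Fin (n+1)) from Fin.succ_ne_zero jS)
    have h2 := (hfar jS hjS).1
    linarith [h1.2]
  · obtain ⟨a, ha⟩ : ∃ a : Fin n, a.succ = i := by
      obtain ⟨k, hk⟩ := Fin.exists_succAbove_eq hi
      exact ⟨k, by rw [← hk, Fin.succAbove_zero]⟩
    by_cases haS : a ∈ S
    · have hja : jc ≠ a := fun hh => hjc (hh ▸ haS)
      have ha1 := hfar a haS
      have hj1 := hnear jc hjc
      have ho := hord a haS jc hjc
      have hb : toArc (θ i) (θ jc.succ)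
          = toArc (θ 0) (θ jc.succ) - toArc (θ 0) (θ a.succ) + 2*π := by
        rw [← ha]
        refine toArc_diff ⟨?_, ?_⟩ (-1) (by push_cast; ring)
        · linarith [ha1.2, hj1.1]
        · linarith [ha1.1, hj1.2]
      have h1 := AEvt_spec hθ (show jc.succ ≠ i by
        rw [← ha]; exact fun hh => hja (Fin.succ_injective _ hh))
      rw [hb] at h1
      have := h1.2
      linarith [ha1.1, hj1.2]
    · have ha1 := hnear a haS
      have hz : toArc (θ i) (θ 0) = 2*π - toArc (θ 0) (θ a.succ) := by
        rw [← ha]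
        exact toArc_anti (by linarith [ha1.1])
      have h1 := AEvt_spec hθ (show (0 : Fin (n+1)) ≠ i by
        rw [← ha]; exact (Fin.succ_ne_zero a).symm)
      rw [hz] at h1
      have := h1.2
      linarith [ha1.2]

lemma Psi_disj {S S' : Finset (Fin n)} (h : S ≠ S') :
    Disjoint (PsiEvt δ S) (PsiEvt δ S') := by
  have hπ := pi_pos
  rw [Set.disjoint_left]
  rintro θ ⟨hnear, hfar, _⟩ ⟨hnear', hfar', _⟩
  obtain ⟨j, hj⟩ : ∃ j, (j ∈ S ∧ j ∉ S') ∨ (j ∈ S' ∧ j ∉ S) := by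
    by_contra hc
    push_neg at hc
    apply h
    ext j
    have := hc j
    tauto
  rcases hj with ⟨h1, h2⟩ | ⟨h1, h2⟩
  · have := (hfar j h1).1
    have := (hnear' j h2).2
    linarith
  · have := (hfar' j h1).1
    have := (hnear j h2).2
    linarith

lemma measure_AEvt (i : Fin (n+1)) :
    (Measure.pi fun _ : Fin (n+1) => unifAngle) (AEvt δ i)
      = (ENNReal.ofReal (1 / (2 * π)))^n * (ENNReal.ofReal (π - 2*δ))^n := by
  have hπ := pi_pos
  have hsub : (univ.pi fun _ : Fin n => Ioo 0 (π - 2*δ)) ⊆ univ.pi fun _ => Ico 0 (2*π) := by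
    intro v hv
    rw [Set.mem_univ_pi] at hv ⊢
    intro j
    have h := hv j
    exact ⟨h.1.le, by linarith [h.2]⟩
  rw [AEvt_eq_anchored,
    measure_anchored i (MeasurableSet.univ_pi fun _ => measurableSet_Ioo) hsub, volume_pi_pi]
  simp [Real.volume_Ioo]

lemma measure_PsiEvt (S : Finset (Fin n)) :
    (Measure.pi fun _ : Fin (n+1) => unifAngle) (PsiEvt δ S)
      = (ENNReal.ofReal (1 / (2 * π)))^n * volume (PiS (π - 6*δ) S) := by
  have hπ := pi_pos
  have hmc : Measurable (fun y : Fin n → ℝ => y - cS δ S) := measurable_id.sub_const _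
  have hDm : MeasurableSet ((fun y : Fin n → ℝ => y - cS δ S) ⁻¹' (PiS (π - 6*δ) S)) :=
    hmc (measurable_PiS _ S)
  have hsub : ((fun y : Fin n → ℝ => y - cS δ S) ⁻¹' (PiS (π - 6*δ) S))
      ⊆ univ.pi fun _ => Ico 0 (2*π) := by
    intro y hy
    rw [Set.mem_preimage] at hy
    obtain ⟨hbox, _⟩ := hy
    rw [Set.mem_univ_pi]
    intro j
    have hthis := hbox j
    simp only [Pi.sub_apply, mem_Ico] at hthis
    by_cases hj : j ∈ S
    · simp only [cS, if_pos hj] at hthis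
      constructor <;> [linarith [hthis.1]; linarith [hthis.2]]
    · simp only [cS, if_neg hj] at hthis
      constructor <;> [linarith [hthis.1]; linarith [hthis.2]]
  rw [PsiEvt_eq_anchored, measure_anchored (0 : Fin (n+1)) hDm hsub,
    volume_preimage_sub_const]

end Events
end Stmt8


open Stmt8 in
/-- For N ≥ 2 i.i.d. points uniform on the circle of circumference 2π and
0 < δ < π/6, the probability P(δ) that every pairwise circular included angle
(shorter arc distance) is at most π − 2δ is bounded below by
N·((π−2δ)/(2π))^{N−1} + (N−2)·((π−6δ)/(2π))^{N−1}. -/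
theorem stmt_8 (N : ℕ) (hN : 2 ≤ N) (δ : ℝ) (hδ1 : 0 < δ) (hδ2 : δ < π / 6) :
    ((Measure.pi fun _ : Fin N => unifAngle)
      {θ : Fin N → ℝ | ∀ i j, i ≠ j →
        ‖((θ i - θ j : ℝ) : AddCircle (2 * π))‖ ≤ π - 2 * δ}).toReal
    ≥ N * ((π - 2 * δ) / (2 * π)) ^ (N - 1) + ((N : ℝ) - 2) * ((π - 6 * δ) / (2 * π)) ^ (N - 1) := by
  have hπ := Real.pi_pos
  obtain ⟨n, rfl⟩ : ∃ n, N = n + 1 := ⟨N - 1, by omega⟩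
  have hn : 1 ≤ n := by omega
  set μ := Measure.pi fun _ : Fin (n+1) => unifAngle with hμ
  set E := {θ : Fin (n+1) → ℝ | ∀ i j, i ≠ j →
      ‖((θ i - θ j : ℝ) : AddCircle (2 * π))‖ ≤ π - 2 * δ} with hE
  set 𝒮 : Finset (Finset (Fin n)) :=
    Finset.univ.filter (fun S => S ≠ ∅ ∧ S ≠ Finset.univ) with h𝒮
  have h𝒮mem : ∀ S ∈ 𝒮, S ≠ ∅ ∧ S ≠ Finset.univ := by
    intro S hS
    rw [h𝒮, Finset.mem_filter] at hS
    exact hS.2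
  set UA := ⋃ i ∈ (Finset.univ : Finset (Fin (n+1))), AEvt δ i with hUA
  set UP := ⋃ S ∈ 𝒮, PsiEvt δ S with hUP
  -- inclusion
  have hincl : UA ∪ UP ⊆ E := by
    rintro θ (hθ | hθ)
    · rw [hUA, Set.mem_iUnion₂] at hθ
      obtain ⟨i, _, hθ⟩ := hθ
      exact AEvt_subset_E hδ1 hδ2 i hθ
    · rw [hUP, Set.mem_iUnion₂] at hθ
      obtain ⟨S, hS, hθ⟩ := hθ
      exact PsiEvt_subset_E hδ1 hδ2 (h𝒮mem S hS).1 (h𝒮mem S hS).2 hθ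
  -- measurability of unions
  have hmUA : MeasurableSet UA :=
    (Finset.univ : Finset (Fin (n+1))).measurableSet_biUnion fun i _ => measurable_AEvt (δ := δ) i
  have hmUP : MeasurableSet UP :=
    𝒮.measurableSet_biUnion fun S _ => measurable_PsiEvt (δ := δ) S
  -- disjointness of the two unions
  have hUAP : Disjoint UA UP := by
    rw [Set.disjoint_left]
    intro θ hA hP
    rw [hUA, Set.mem_iUnion₂] at hA
    rw [hUP, Set.mem_iUnion₂] at hP
    obtain ⟨i, _, hA⟩ := hA
    obtain ⟨S, hS, hP⟩ := hP
    exact Set.disjoint_left.1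
      (AEvt_Psi_disj hδ1 hδ2 i
        (Finset.nonempty_iff_ne_empty.2 (h𝒮mem S hS).1) (h𝒮mem S hS).2) hA hP
  -- measures of the unions
  have hsumA : μ UA = (n+1) • ((ENNReal.ofReal (1 / (2*π)))^n * (ENNReal.ofReal (π - 2*δ))^n) := by
    rw [hUA, measure_biUnion_finset ?hd (fun i _ => measurable_AEvt (δ := δ) i)]
    · rw [Finset.sum_congr rfl (fun i _ => measure_AEvt hδ1 hδ2 i), Finset.sum_const,
        Finset.card_univ, Fintype.card_fin]
    · intro i _ i' _ hne
      exact AEvt_disj hδ1 hδ2 hne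
  have hsumP : μ UP = (ENNReal.ofReal (1 / (2*π)))^n *
      ((n - 1) • (ENNReal.ofReal (π - 6*δ))^n) := by
    rw [hUP, measure_biUnion_finset ?hd2 (fun S _ => measurable_PsiEvt (δ := δ) S)]
    · rw [Finset.sum_congr rfl (fun S _ => measure_PsiEvt hδ1 hδ2 S), ← Finset.mul_sum]
      congr 1
      -- fiberwise sum over cardinality
      have hmaps : ∀ S ∈ 𝒮, S.card ∈ Finset.Ico 1 n := by
        intro S hS
        obtain ⟨h1, h2⟩ := h𝒮mem S hS
        rw [Finset.mem_Ico]
        constructor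
        · exact Nat.one_le_iff_ne_zero.2 fun hc => h1 (Finset.card_eq_zero.1 hc)
        · rcases lt_or_eq_of_le (le_trans (Finset.card_le_card (Finset.subset_univ S))
            (le_of_eq (by rw [Finset.card_univ, Fintype.card_fin]))) with h | h
          · exact h
          · exact absurd (Finset.eq_univ_of_card S (by rw [h]; exact (Fintype.card_fin n).symm))
              h2
      rw [← Finset.sum_fiberwise_of_maps_to hmaps (fun S => volume (PiS (π - 6*δ) S))]
      have hfib : ∀ m ∈ Finset.Ico 1 n,
          ∑ S ∈ 𝒮.filter (fun S => S.card = m), volume (PiS (π - 6*δ) S)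
            = (ENNReal.ofReal (π - 6*δ)) ^ n := by
        intro m hm
        rw [Finset.mem_Ico] at hm
        have hfeq : 𝒮.filter (fun S => S.card = m)
            = Finset.powersetCard m (Finset.univ : Finset (Fin n)) := by
          ext S
          rw [Finset.mem_filter, h𝒮, Finset.mem_filter, Finset.mem_powersetCard_univ]
          constructor
          · rintro ⟨_, h⟩; exact h
          · intro h
            refine ⟨⟨Finset.mem_univ S, ?_, ?_⟩, h⟩
            · intro hc
              rw [hc, Finset.card_empty] at h
              omega
            · intro hc
              rw [hc, Finset.card_univ, Fintype.card_fin] at h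
              omega
        rw [hfeq]
        exact sum_volume_PiS (by nlinarith) (le_of_lt hm.2)
      rw [Finset.sum_congr rfl hfib, Finset.sum_const, Nat.card_Ico]
    · intro S hS S' hS' hne
      exact Psi_disj hδ1 hδ2 hne
  -- put everything together in ℝ≥0∞
  have hq0 : (0:ℝ) ≤ (π - 2*δ) / (2*π) := by
    apply div_nonneg _ (by positivity)
    nlinarith
  have hr0 : (0:ℝ) ≤ (π - 6*δ) / (2*π) := by
    apply div_nonneg _ (by positivity)
    nlinarith
  have hconvA : (ENNReal.ofReal (1 / (2*π)))^n * (ENNReal.ofReal (π - 2*δ))^n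
      = ENNReal.ofReal (((π - 2*δ) / (2*π))^n) := by
    have hq : (1 / (2*π)) * (π - 2*δ) = (π - 2*δ) / (2*π) := by ring
    rw [← mul_pow, ← ENNReal.ofReal_mul (by positivity : (0:ℝ) ≤ 1/(2*π)), hq,
      ← ENNReal.ofReal_pow hq0]
  have hconvP : (ENNReal.ofReal (1 / (2*π)))^n * (ENNReal.ofReal (π - 6*δ))^n
      = ENNReal.ofReal (((π - 6*δ) / (2*π))^n) := by
    have hr : (1 / (2*π)) * (π - 6*δ) = (π - 6*δ) / (2*π) := by ring
    rw [← mul_pow, ← ENNReal.ofReal_mul (by positivity : (0:ℝ) ≤ 1/(2*π)), hr,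
      ← ENNReal.ofReal_pow hr0]
  have hbound : ENNReal.ofReal ((n+1) * ((π - 2*δ) / (2*π))^n
      + (n-1 : ℕ) * ((π - 6*δ) / (2*π))^n) ≤ μ E := by
    have hle : μ (UA ∪ UP) ≤ μ E := measure_mono hincl
    rw [measure_union hUAP hmUP, hsumA, hsumP] at hle
    refine le_trans (le_of_eq ?_) hle
    rw [ENNReal.ofReal_add (by positivity) (by positivity),
      ENNReal.ofReal_mul (by positivity), ENNReal.ofReal_mul (by positivity)]
    congr 1
    · rw [nsmul_eq_mul, hconvA]
      congr 1
      rw [← ENNReal.ofReal_natCast]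
      congr 1
      push_cast; ring
    · rw [nsmul_eq_mul, mul_comm ((n - 1 : ℕ) : ENNReal), ← mul_assoc, hconvP, mul_comm]
      congr 1
      rw [← ENNReal.ofReal_natCast]
  -- conclude in ℝ
  have hfin : μ E ≠ ⊤ := by
    have h1 : μ E ≤ 1 := by
      refine le_trans (measure_mono (Set.subset_univ E)) ?_
      rw [hμ, Measure.pi_univ]
      simp
    exact ne_top_of_le_ne_top (by simp) h1
  have := ENNReal.toReal_mono hfin hbound
  rw [ENNReal.toReal_ofReal (by positivity)] at this
  rw [ge_iff_le]
  refine le_trans (le_of_eq ?_) this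
  have hNn : n + 1 - 1 = n := by omega
  rw [hNn]
  have hc2 : ((n+1 : ℕ) : ℝ) - 2 = ((n - 1 : ℕ) : ℝ) := by
    rw [Nat.cast_sub hn]
    push_cast; ring
  rw [hc2]
  push_cast
  ring
end

section
/- Suppose N points are i.i.d. uniform on a circle of circumference 2π, with N ≥ 2 and δ ≥ π/6. If all pairwise circular included angles are strictly less than π − 2δ ≤ 2π/3, and (i₀, j₀) maximizes the included angle, then for every other index k one has θ'_{i₀ j₀} = θ'_{i₀ k} + θ'_{j₀ k} (i.e., point k lies on the shorter arc between points i₀ and j₀). -/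
open Real

lemma exists_rep (p : ℝ) (hp : 0 < p) (x : AddCircle p) :
    ∃ a : ℝ, (a : AddCircle p) = x ∧ |a| = ‖x‖ ∧ |a| ≤ p / 2 := by
  obtain ⟨r, rfl⟩ := QuotientAddGroup.mk_surjective x
  refine ⟨r - round (p⁻¹ * r) * p, ?_, ?_, ?_⟩
  · have h0 : (((round (p⁻¹ * r) : ℝ) * p : ℝ) : AddCircle p) = 0 := by
      rw [show ((round (p⁻¹ * r) : ℝ) * p) = round (p⁻¹ * r) • (p : ℝ) from
        (zsmul_eq_mul p (round (p⁻¹ * r))).symm, AddCircle.coe_zsmul,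
        AddCircle.coe_period, smul_zero]
    rw [sub_eq_add_neg, AddCircle.coe_add, AddCircle.coe_neg, h0, neg_zero, add_zero]
  · rw [AddCircle.norm_eq]
  · have h := AddCircle.norm_le_half_period (p := p) (x := (r : AddCircle p)) hp.ne'
    rw [AddCircle.norm_eq, abs_of_pos hp] at h
    exact h

lemma norm_coe_of_le (p : ℝ) (hp : 0 < p) {a : ℝ} (ha : |a| ≤ p / 2) :
    ‖(a : AddCircle p)‖ = |a| :=
  (AddCircle.norm_coe_eq_abs_iff p hp.ne').2 (by rwa [abs_of_pos hp])

lemma opp_case {a b s : ℝ} (hab : a * b ≤ 0) (ha : |a| ≤ s) (hb : |b| ≤ s)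
    (hs : s = |a + b|) : s = |a| + |b| := by
  rcases le_total 0 a with h1 | h1 <;> rcases le_total 0 b with h2 | h2
  · have h := le_antisymm hab (mul_nonneg h1 h2)
    rcases mul_eq_zero.mp h with rfl | rfl <;> simp_all
  · rw [abs_of_nonneg h1] at ha ⊢
    rw [abs_of_nonpos h2] at hb ⊢
    rcases abs_cases (a + b) with ⟨h5, _⟩ | ⟨h5, _⟩ <;> rw [h5] at hs <;> linarith
  · rw [abs_of_nonpos h1] at ha ⊢
    rw [abs_of_nonneg h2] at hb ⊢
    rcases abs_cases (a + b) with ⟨h5, _⟩ | ⟨h5, _⟩ <;> rw [h5] at hs <;> linarith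
  · have h : a * b = 0 := le_antisymm hab (by nlinarith)
    rcases mul_eq_zero.mp h with rfl | rfl <;> simp_all

lemma abs_add_small {a b : ℝ} (hab : a * b ≤ 0) : |a + b| ≤ max |a| |b| := by
  rcases le_total 0 a with h1 | h1 <;> rcases le_total 0 b with h2 | h2
  · have h := le_antisymm hab (mul_nonneg h1 h2)
    rcases mul_eq_zero.mp h with rfl | rfl <;> simp
  · rcases le_total 0 (a + b) with h3 | h3
    · exact le_max_of_le_left (by rw [abs_of_nonneg h3, abs_of_nonneg h1]; linarith)
    · exact le_max_of_le_right (by rw [abs_of_nonpos h3, abs_of_nonpos h2]; linarith)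
  · rcases le_total 0 (a + b) with h3 | h3
    · exact le_max_of_le_right (by rw [abs_of_nonneg h3, abs_of_nonneg h2]; linarith)
    · exact le_max_of_le_left (by rw [abs_of_nonpos h3, abs_of_nonpos h1]; linarith)
  · have h : a * b = 0 := le_antisymm hab (by nlinarith)
    rcases mul_eq_zero.mp h with rfl | rfl <;> simp

/-- Deterministic claim: if N ≥ 2 points on the circle of circumference 2π have all
pairwise circular (shorter-arc) distances strictly less than π − 2δ with δ ≥ π/6
(so π − 2δ ≤ 2π/3), and (i₀, j₀) maximizes the pairwise distance, then every other
point k lies on the shorter arc between points i₀ and j₀, i.e.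
θ'_{i₀j₀} = θ'_{i₀k} + θ'_{j₀k}. -/
theorem stmt_10 (N : ℕ) (hN : 2 ≤ N) (δ : ℝ) (hδ1 : π / 6 ≤ δ) (hδ2 : δ < π / 2)
    (θ : Fin N → AddCircle (2 * π))
    (hall : ∀ i j, ‖θ i - θ j‖ < π - 2 * δ)
    (i₀ j₀ : Fin N) (hmax : ∀ i j, ‖θ i - θ j‖ ≤ ‖θ i₀ - θ j₀‖) :
    ∀ k, k ≠ i₀ → k ≠ j₀ →
      ‖θ i₀ - θ j₀‖ = ‖θ i₀ - θ k‖ + ‖θ j₀ - θ k‖ := by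
  intro k _ _
  have hπ : 0 < π := Real.pi_pos
  have hp : (0:ℝ) < 2 * π := by linarith
  obtain ⟨a, ha, hna, hha⟩ := exists_rep (2*π) hp (θ i₀ - θ k)
  obtain ⟨b, hb, hnb, hhb⟩ := exists_rep (2*π) hp (θ k - θ j₀)
  have hsum : ((a + b : ℝ) : AddCircle (2*π)) = θ i₀ - θ j₀ := by
    rw [AddCircle.coe_add, ha, hb]; abel
  have hnkj : ‖θ j₀ - θ k‖ = ‖θ k - θ j₀‖ := by rw [← norm_neg]; congr 1; abel
  have hsa : |a| ≤ ‖θ i₀ - θ j₀‖ := hna ▸ hmax i₀ k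
  have hsb : |b| ≤ ‖θ i₀ - θ j₀‖ := by rw [hnb, ← hnkj]; exact hmax j₀ k
  have hbound : ‖θ i₀ - θ j₀‖ < π - 2 * δ := hall i₀ j₀
  have key : ‖θ i₀ - θ j₀‖ = |a| + |b| := by
    rcases le_or_gt (a * b) 0 with hab | hab
    · -- opposite signs
      have hle : |a + b| ≤ (2*π) / 2 := by
        have h1 := abs_add_small hab
        have h2 : max |a| |b| ≤ (2*π)/2 := max_le hha hhb
        linarith
      have hs : ‖θ i₀ - θ j₀‖ = |a + b| := by
        rw [← hsum, norm_coe_of_le _ hp hle]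
      exact opp_case hab hsa hsb hs
    · -- same signs: |a+b| = |a| + |b|
      have habs : |a + b| = |a| + |b| := by
        rcases mul_pos_iff.mp hab with ⟨h1, h2⟩ | ⟨h1, h2⟩
        · rw [abs_of_pos h1, abs_of_pos h2, abs_of_pos (by linarith)]
        · rw [abs_of_neg h1, abs_of_neg h2, abs_of_neg (by linarith)]; ring
      have hlt : |a| + |b| < 2 * (π - 2 * δ) := by
        have h1 : |a| < π - 2 * δ := hna ▸ hall i₀ k
        have h2 : |b| < π - 2 * δ := by rw [hnb, ← hnkj]; exact hall j₀ k
        linarith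
      rcases le_or_gt (|a + b|) π with hle | hgt
      · rw [← hsum, norm_coe_of_le _ hp (by linarith), habs]
      · exfalso
        have hab2 : |a + b| < 2 * π := by rw [habs]; linarith
        have hs : ‖θ i₀ - θ j₀‖ = 2 * π - |a + b| := by
          rcases abs_cases (a + b) with ⟨h5, h6⟩ | ⟨h5, h6⟩
          · have hcoe : ((a + b - 2*π : ℝ) : AddCircle (2*π)) = θ i₀ - θ j₀ := by
              rw [sub_eq_add_neg, AddCircle.coe_add, hsum, AddCircle.coe_neg,
                AddCircle.coe_period, neg_zero, add_zero]
            rw [← hcoe, norm_coe_of_le _ hp (by rw [abs_le]; constructor <;> linarith),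
              abs_of_nonpos (by linarith)]
            rw [h5]; ring
          · have hcoe : ((a + b + 2*π : ℝ) : AddCircle (2*π)) = θ i₀ - θ j₀ := by
              rw [AddCircle.coe_add, hsum, AddCircle.coe_period, add_zero]
            rw [← hcoe, norm_coe_of_le _ hp (by rw [abs_le]; constructor <;> linarith),
              abs_of_nonneg (by linarith)]
            rw [h5]; ring
        rw [hs, habs] at hbound
        linarith
  rw [key, hna, hnb, hnkj]
end

section
/- Let two anchors A_i, A_j and an uncertainty disk 𝒜_U of radius r centered at p* be given, with the line A_iA_j not intersecting 𝒜_U. Then over p ∈ 𝒜_U, the function p ↦ 1/sin²(∠A_i p A_j) attains its maximum on the boundary circle of 𝒜_U. -/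
/-! The objective is continuous on the disk, since no point of the disk is collinear with the
anchors, so it attains its maximum at some `p₁`. The circle through `A`, `p₁`, `B` is connected
and contains `p₁` inside the disk and `A` outside it, so it meets the boundary circle at some `p₀`.
By the law of sines, `sin ∠ A q B = dist A B / (2 R)` at every point `q ≠ A, B` of that circle,
so `p₀` is a maximizer as well. -/

open Real EuclideanGeometry Metric
open scoped EuclideanSpace

section

variable {V P : Type*} [NormedAddCommGroup V] [InnerProductSpace ℝ V] [MetricSpace P]
  [NormedAddTorsor V P]

lemma continuousOn_one_div_sin_angle_sq (A B : P) :
    ContinuousOn (fun p => 1 / Real.sin (∠ A p B) ^ 2) {p | ¬Collinear ℝ {A, p, B}} := by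
  intro p hp
  have hpA : A ≠ p := by rintro rfl; exact hp (by simpa using collinear_pair ℝ A B)
  have hpB : B ≠ p := by rintro rfl; exact hp (by simpa using collinear_pair ℝ A B)
  have hangle : ContinuousAt (fun q => ∠ A q B) p :=
    (continuousAt_angle (x := (A, p, B)) hpA hpB).comp (f := fun q => (A, q, B)) (by fun_prop)
  exact (continuousAt_const.div ((Real.continuous_sin.continuousAt.comp hangle).pow 2)
    (pow_ne_zero 2 (sin_pos_of_not_collinear hp).ne')).continuousWithinAt

lemma EuclideanGeometry.Sphere.sin_angle_eq_dist_div_two_mul_radius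
    [hd2 : Fact (Module.finrank ℝ V = 2)] {s : Sphere P} {A q B : P}
    (hA : A ∈ s) (hq : q ∈ s) (hB : B ∈ s) (hAq : A ≠ q) (hAB : A ≠ B) (hqB : q ≠ B) :
    Real.sin (∠ A q B) = dist A B / (2 * s.radius) := by
  have : FiniteDimensional ℝ V := .of_fact_finrank_eq_two
  have hcos : Cospherical ({A, q, B} : Set P) := ⟨s.center, s.radius, by simp_all⟩
  let t : Affine.Triangle ℝ P := ⟨![A, q, B], hcos.affineIndependent_of_ne hAq hAB hqB⟩
  have hspan : affineSpan ℝ (Set.range t.points) = ⊤ := by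
    rw [t.independent.affineSpan_eq_top_iff_card_eq_finrank_add_one]
    simp [hd2.out]
  have hradius : s.radius = t.circumradius :=
    t.eq_circumradius_of_dist_eq (hspan ▸ AffineSubspace.mem_top ℝ V s.center)
      (by intro i; fin_cases i <;> simpa [t] using ‹_›)
  have hsin : dist A B / Real.sin (∠ A q B) = 2 * t.circumradius :=
    t.dist_div_sin_angle_eq_two_mul_circumradius (i₁ := 0) (i₂ := 1) (i₃ := 2)
      (by decide) (by decide) (by decide)
  rw [hradius, ← hsin, div_div_cancel₀ (dist_ne_zero.2 hAB)]

lemma not_collinear_of_disjoint_affineSpan_pair {A B c p : P} {r : ℝ}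
    (hline : Disjoint (line[ℝ, A, B] : Set P) (closedBall c r)) (hAB : A ≠ B)
    (hp : p ∈ closedBall c r) : ¬Collinear ℝ {A, p, B} := fun hcol =>
  Set.disjoint_left.1 hline
    (hcol.mem_affineSpan_of_mem_of_ne (by simp) (by simp) (by simp) hAB) hp

end

section

variable {E : Type*} [NormedAddCommGroup E] [InnerProductSpace ℝ E]
  [hd2 : Fact (Module.finrank ℝ E = 2)]

lemma exists_dist_eq_sin_angle_eq_of_not_collinear {A B c p : E} {r : ℝ}
    (hA : A ∉ closedBall c r) (hB : B ∉ closedBall c r) (hp : p ∈ closedBall c r)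
    (hABp : ¬Collinear ℝ {A, p, B}) :
    ∃ p₀, dist p₀ c = r ∧ Real.sin (∠ A p₀ B) = Real.sin (∠ A p B) := by
  have : FiniteDimensional ℝ E := .of_fact_finrank_eq_two
  let t : Affine.Triangle ℝ E := ⟨![A, p, B], affineIndependent_iff_not_collinear_set.2 hABp⟩
  let s := t.circumsphere
  have hAs : A ∈ s := t.mem_circumsphere 0
  have hps : p ∈ s := t.mem_circumsphere 1
  have hBs : B ∈ s := t.mem_circumsphere 2
  have hAB : A ≠ B := t.independent.injective.ne (by decide : (0 : Fin 3) ≠ 2)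
  have hrank : 1 < Module.rank ℝ E := by
    rw [← Module.finrank_eq_rank, hd2.out]; norm_num
  have hconn : IsConnected (sphere s.center s.radius) :=
    isConnected_sphere hrank _ (t.circumsphere_radius ▸ t.circumradius_nonneg)
  obtain ⟨p₀, hp₀s, hp₀⟩ := hconn.isPreconnected.intermediate_value (a := p) (b := A)
    hps hAs (continuous_id.dist continuous_const).continuousOn
    ⟨mem_closedBall.1 hp, (not_le.1 (mem_closedBall.not.1 hA)).le⟩
  have hp₀ball : p₀ ∈ closedBall c r := mem_closedBall.2 hp₀.le
  refine ⟨p₀, hp₀, ?_⟩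
  rw [Sphere.sin_angle_eq_dist_div_two_mul_radius hAs hp₀s hBs
      (by rintro rfl; exact hA hp₀ball) hAB
      (by rintro rfl; exact hB hp₀ball),
    Sphere.sin_angle_eq_dist_div_two_mul_radius hAs hps hBs
      (by rintro rfl; exact hA hp) hAB
      (by rintro rfl; exact hB hp)]

end

/-- If the line through the anchors A, B misses the closed disk of radius r around p*,
then p ↦ 1/sin²(∠ A p B) attains its maximum over the disk at a boundary point. -/
theorem stmt_15 (A B pstar : EuclideanSpace ℝ (Fin 2)) (r : ℝ) (hr : 0 < r)
    (hAB : A ≠ B)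
    (hline : ∀ t : ℝ, r < dist (A + t • (B - A)) pstar) :
    ∃ p₀ : EuclideanSpace ℝ (Fin 2), dist p₀ pstar = r ∧
      ∀ p : EuclideanSpace ℝ (Fin 2), dist p pstar ≤ r →
        1 / Real.sin (EuclideanGeometry.angle A p B) ^ 2
          ≤ 1 / Real.sin (EuclideanGeometry.angle A p₀ B) ^ 2 := by
  have hdisj : Disjoint (line[ℝ, A, B] : Set (EuclideanSpace ℝ (Fin 2))) (closedBall pstar r) := by
    refine Set.disjoint_left.2 fun q hq hqr => ?_
    obtain ⟨t, rfl⟩ := mem_affineSpan_pair_iff_exists_lineMap_eq.1 hq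
    rw [AffineMap.lineMap_apply_module', add_comm, mem_closedBall] at hqr
    exact (hline t).not_ge hqr
  have hncol (p) (hp : p ∈ closedBall pstar r) : ¬Collinear ℝ {A, p, B} :=
    not_collinear_of_disjoint_affineSpan_pair hdisj hAB hp
  have hout (q) (hq : q ∈ line[ℝ, A, B]) : q ∉ closedBall pstar r := Set.disjoint_left.1 hdisj hq
  obtain ⟨p₁, hp₁, hmax⟩ := (isCompact_closedBall pstar r).exists_isMaxOn
    (nonempty_closedBall.2 hr.le) ((continuousOn_one_div_sin_angle_sq A B).mono hncol)
  obtain ⟨p₀, hp₀, hsin⟩ := exists_dist_eq_sin_angle_eq_of_not_collinear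
    (hout A (left_mem_affineSpan_pair ℝ A B)) (hout B (right_mem_affineSpan_pair ℝ A B)) hp₁
    (hncol p₁ hp₁)
  exact ⟨p₀, hp₀, fun p hp => hsin ▸ hmax (mem_closedBall.2 hp)⟩
end

section
/- For N ≥ 2 i.i.d. points uniform on the circle of circumference 2π and δ ≥ π/6, the probability N((π−2δ)/(2π))^{N−1} that all pairwise included angles avoid [π/2−δ, π/2+δ] under the doubled-angle map equals the probability that all N points θ'_n = 2θ_n (mod 2π) lie in a common closed arc of length π − 2δ. -/
/-!
On `ℝ / 2πℤ` the doubled angle has norm `‖2θ‖ = π - |π - 2‖θ‖|`, so the included angle `‖θ‖`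
avoids `[π/2 - δ, π/2 + δ]` exactly when `‖2θ‖ < l := π - 2δ`. Both events are therefore events
about the doubled angles `zₙ`, which are i.i.d. Haar distributed, and both lie between the union
over `i` of "all `zⱼ`, `j ≠ i`, lie in the open arc `(zᵢ, zᵢ + l)`" and the same union with closed
arcs; for pairwise distances `< l` this needs `3l ≤ 2π`, i.e. `δ ≥ π/6`. Conditioning on `zᵢ`,
each of these events has probability `(l/2π)^(N-1)`, and the open ones are pairwise disjoint as
`2l ≤ 2π`, so both unions have probability `N (l/2π)^(N-1)`.
-/

open Real MeasureTheory

open Metric Set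
open scoped ENNReal

theorem measure_pi_forall_ne_mem {α : Type*} [MeasurableSpace α] (μ : Measure α)
    [IsProbabilityMeasure μ] {n : ℕ} (i : Fin (n + 1)) {B : α → Set α}
    (hB : MeasurableSet {q : α × α | q.2 ∈ B q.1}) {v : ℝ≥0∞} (hv : ∀ x, μ (B x) = v) :
    Measure.pi (fun _ : Fin (n + 1) => μ) {z | ∀ j ≠ i, z j ∈ B (z i)} = v ^ n := by
  set S := {q : α × (Fin n → α) | ∀ j, q.2 j ∈ B q.1}
  have hS : MeasurableSet S := by
    simp only [S, ofPred_forall]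
    exact .iInter fun j =>
      hB.preimage (measurable_fst.prodMk ((measurable_pi_apply j).comp measurable_snd))
  have hpre : {z : Fin (n + 1) → α | ∀ j ≠ i, z j ∈ B (z i)} =
      MeasurableEquiv.piFinSuccAbove (fun _ => α) i ⁻¹' S := by
    ext z
    simp only [mem_ofPred_eq, mem_preimage, S, MeasurableEquiv.piFinSuccAbove_apply]
    exact ⟨fun h j => h _ (Fin.succAbove_ne i j), fun h j hj => by
      obtain ⟨k, rfl⟩ := Fin.exists_succAbove_eq hj
      exact h k⟩
  have hsection : ∀ x, Prod.mk x ⁻¹' S = univ.pi fun _ => B x := fun x => by ext; simp [S]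
  rw [hpre, (measurePreserving_piFinSuccAbove (fun _ => μ) i).measure_preimage
    hS.nullMeasurableSet, Measure.prod_apply hS]
  simp only [hsection, Measure.pi_pi, hv, Finset.prod_const, Finset.card_univ, Fintype.card_fin,
    lintegral_const, measure_univ, mul_one]

namespace AddCircle

section

variable {T : ℝ}

/-- The arc `[a, a + l]`, as the closed ball about its midpoint. -/
def closedArc (a : AddCircle T) (l : ℝ) : Set (AddCircle T) :=
  closedBall (a + ((l / 2 : ℝ) : AddCircle T)) (l / 2)

/-- The arc `(a, a + l)`, as the open ball about its midpoint. -/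
def openArc (a : AddCircle T) (l : ℝ) : Set (AddCircle T) :=
  ball (a + ((l / 2 : ℝ) : AddCircle T)) (l / 2)

theorem openArc_subset_closedArc (a : AddCircle T) (l : ℝ) : openArc a l ⊆ closedArc a l :=
  ball_subset_closedBall

theorem dist_lt_of_mem_closedArc_of_mem_openArc {a x y : AddCircle T} {l : ℝ}
    (hx : x ∈ closedArc a l) (hy : y ∈ openArc a l) : dist x y < l := by
  have := dist_triangle_right x y (a + ((l / 2 : ℝ) : AddCircle T))
  rw [closedArc, mem_closedBall] at hx
  rw [openArc, mem_ball] at hy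
  linarith

end

section

variable {T : ℝ} [hT : Fact (0 < T)]

theorem exists_coe_eq_and_abs_eq_norm (z : AddCircle T) :
    ∃ x : ℝ, (x : AddCircle T) = z ∧ |x| = ‖z‖ := by
  obtain ⟨x, hx, rfl⟩ : ∃ x ∈ Ioc (-(T / 2)) (-(T / 2) + T), (x : AddCircle T) = z :=
    ⟨_, (QuotientAddGroup.equivIocMod hT.out _ z).2,
      (QuotientAddGroup.equivIocMod hT.out _).symm_apply_apply z⟩
  refine ⟨x, rfl, ((norm_coe_eq_abs_iff T hT.out.ne').2 ?_).symm⟩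
  rw [abs_of_pos hT.out, abs_le]
  constructor <;> linarith [hx.1, hx.2]

theorem norm_coe_eq_self {x : ℝ} (h0 : 0 ≤ x) (h : x ≤ T / 2) : ‖(x : AddCircle T)‖ = x := by
  rw [(norm_coe_eq_abs_iff T hT.out.ne').2, abs_of_nonneg h0]
  rwa [abs_of_nonneg h0, abs_of_pos hT.out]

theorem norm_coe_two_mul (x : ℝ) :
    ‖((2 * x : ℝ) : AddCircle T)‖ = T / 2 - |T / 2 - 2 * ‖(x : AddCircle T)‖| := by
  obtain ⟨u, hu, hnorm⟩ := exists_coe_eq_and_abs_eq_norm (x : AddCircle T)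
  have hcoe : ‖((2 * x : ℝ) : AddCircle T)‖ = ‖((2 * |u| : ℝ) : AddCircle T)‖ := by
    have h2 : ((2 * x : ℝ) : AddCircle T) = ((2 * u : ℝ) : AddCircle T) := by
      rw [two_mul, two_mul, coe_add, coe_add, hu]
    rcases abs_choice u with h | h <;> simp [h2, h]
  have huT : |u| ≤ T / 2 := by
    simpa [hnorm, abs_of_pos hT.out] using norm_le_half_period T (x := (x : AddCircle T)) hT.out.ne'
  rw [hcoe, ← hnorm]
  have hu0 := abs_nonneg u
  generalize |u| = s at huT hu0 ⊢
  rcases le_total s (T / 4) with h | h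
  · rw [norm_coe_eq_self (by positivity) (by linarith), abs_of_nonneg (by linarith)]
    ring
  · have hreflect : ((2 * s : ℝ) : AddCircle T) = -((T - 2 * s : ℝ) : AddCircle T) := by
      rw [← coe_neg, neg_sub, ← coe_add_period T (2 * s - T), sub_add_cancel]
    rw [hreflect, norm_neg, norm_coe_eq_self (by linarith) (by linarith),
      abs_of_nonpos (by linarith)]
    ring

theorem norm_notMem_Icc_iff_norm_coe_two_mul_lt (x δ : ℝ) :
    ‖(x : AddCircle T)‖ ∉ Icc (T / 4 - δ) (T / 4 + δ) ↔
      ‖((2 * x : ℝ) : AddCircle T)‖ < T / 2 - 2 * δ := by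
  have h : |T / 2 - 2 * ‖(x : AddCircle T)‖| = 2 * |T / 4 - ‖(x : AddCircle T)‖| := by
    rw [← abs_two, ← abs_mul, abs_two]; ring_nf
  rw [← mem_Icc_iff_abs_le, not_le, norm_coe_two_mul, h]
  constructor <;> intro <;> linarith

theorem mem_closedArc_iff {a w : AddCircle T} {l : ℝ} :
    w ∈ closedArc a l ↔ ∃ t ∈ Icc 0 l, w = a + t := by
  constructor
  · intro hw
    obtain ⟨x, hx, hnorm⟩ :=
      exists_coe_eq_and_abs_eq_norm (w - (a + ((l / 2 : ℝ) : AddCircle T)))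
    rw [closedArc, mem_closedBall, dist_eq_norm, ← hnorm, abs_le] at hw
    refine ⟨l / 2 + x, ⟨by linarith, by linarith⟩, ?_⟩
    rw [coe_add, hx]
    abel
  · rintro ⟨t, ⟨ht0, htl⟩, rfl⟩
    rw [closedArc, mem_closedBall, dist_eq_norm, add_sub_add_left_eq_sub, ← coe_sub]
    exact QuotientAddGroup.norm_mk_le_norm.trans (abs_le.2 ⟨by linarith, by linarith⟩)

theorem self_mem_closedArc (a : AddCircle T) {l : ℝ} (hl : 0 ≤ l) : a ∈ closedArc a l :=
  mem_closedArc_iff.2 ⟨0, ⟨le_rfl, hl⟩, by simp⟩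

theorem notMem_openArc_of_mem_openArc {a b : AddCircle T} {l : ℝ} (hl : 2 * l ≤ T)
    (h : b ∈ openArc a l) : a ∉ openArc b l := by
  intro h'
  set c : AddCircle T := ((l / 2 : ℝ) : AddCircle T)
  rw [openArc, mem_ball, dist_eq_norm] at h h'
  have hl0 : 0 ≤ l := by linarith [norm_nonneg (b - (a + c))]
  have hsum : (b - (a + c)) + (a - (b + c)) = -((l : ℝ) : AddCircle T) := by
    rw [← add_halves l, coe_add]; abel
  have := norm_add_le (b - (a + c)) (a - (b + c))
  rw [hsum, norm_neg, norm_coe_eq_self hl0 (by linarith)] at this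
  linarith

variable {ι : Type*} [Finite ι] [Nonempty ι] {z : ι → AddCircle T} {l : ℝ}

theorem exists_forall_mem_closedArc_of_forall_mem_closedArc {a : AddCircle T}
    (h : ∀ k, z k ∈ closedArc a l) : ∃ i, ∀ j, z j ∈ closedArc (z i) l := by
  choose t ht hzt using fun k => mem_closedArc_iff.1 (h k)
  obtain ⟨m, hm⟩ := Finite.exists_min t
  refine ⟨m, fun j => mem_closedArc_iff.2 ⟨t j - t m, ⟨sub_nonneg.2 (hm j), ?_⟩, ?_⟩⟩
  · linarith [(ht j).2, (ht m).1]
  · rw [hzt j, hzt m, coe_sub]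
    abel

theorem exists_forall_mem_closedArc_of_dist_lt (hl0 : 0 < l) (hl : 3 * l ≤ T)
    (h : ∀ i j, i ≠ j → dist (z i) (z j) < l) : ∃ i, ∀ j, z j ∈ closedArc (z i) l := by
  have hdist : ∀ i j, ∃ y : ℝ, (y : AddCircle T) = z i - z j ∧ |y| < l := fun i j => by
    obtain ⟨y, hy, hnorm⟩ := exists_coe_eq_and_abs_eq_norm (z i - z j)
    refine ⟨y, hy, ?_⟩
    rw [hnorm, ← dist_eq_norm]
    rcases eq_or_ne i j with rfl | hij
    · simpa using hl0
    · exact h i j hij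
  obtain ⟨i₀⟩ := ‹Nonempty ι›
  choose y hy hyl using fun k => hdist k i₀
  obtain ⟨m, hm⟩ := Finite.exists_min y
  refine ⟨m, fun j => mem_closedArc_iff.2 ⟨y j - y m, ⟨sub_nonneg.2 (hm j), ?_⟩, ?_⟩⟩
  · -- `y j - y m ∈ [0, 2l)` and the short representative of `z j - z m` lie in a common
    -- fundamental domain `[-l, T - l)`, so they coincide.
    obtain ⟨u, hu, hul⟩ := hdist j m
    have hyj := abs_lt.1 (hyl j)
    have hym := abs_lt.1 (hyl m)
    have hul' := abs_lt.1 hul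
    have : u = y j - y m := by
      refine (coe_eq_coe_iff_of_mem_Ico (p := T) (a := -l)
        ⟨by linarith, by linarith⟩ ⟨by linarith [hm j], by linarith⟩).1 ?_
      rw [hu, coe_sub, hy, hy]
      abel
    linarith
  · rw [coe_sub, hy, hy]
    abel

end

section

variable {T : ℝ} {ι : Type*} {l : ℝ}

def openArcFrom (l : ℝ) (i : ι) : Set (ι → AddCircle T) := {z | ∀ j ≠ i, z j ∈ openArc (z i) l}

def closedArcFrom (l : ℝ) (i : ι) : Set (ι → AddCircle T) :=
  {z | ∀ j ≠ i, z j ∈ closedArc (z i) l}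

theorem openArcFrom_subset_closedArcFrom (l : ℝ) (i : ι) :
    openArcFrom (T := T) l i ⊆ closedArcFrom l i :=
  fun _ hz j hj => openArc_subset_closedArc _ _ (hz j hj)

theorem measurableSet_openArcFrom [Countable ι] (l : ℝ) (i : ι) :
    MeasurableSet (openArcFrom (T := T) l i) := by
  simp only [openArcFrom, openArc, mem_ball, ofPred_forall]
  exact .iInter fun j => .iInter fun _ => measurableSet_lt (by fun_prop) (by fun_prop)

theorem measurableSet_closedArcFrom [Countable ι] (l : ℝ) (i : ι) :
    MeasurableSet (closedArcFrom (T := T) l i) := by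
  simp only [closedArcFrom, closedArc, mem_closedBall, ofPred_forall]
  exact .iInter fun j => .iInter fun _ => measurableSet_le (by fun_prop) (by fun_prop)

theorem measurableSet_setOf_dist_lt [Countable ι] (l : ℝ) :
    MeasurableSet {z : ι → AddCircle T | ∀ j k, j ≠ k → dist (z j) (z k) < l} := by
  simp only [ofPred_forall]
  exact .iInter fun j => .iInter fun k => .iInter fun _ =>
    measurableSet_lt (by fun_prop) (by fun_prop)

variable [Fact (0 < T)]

theorem pairwise_disjoint_openArcFrom (hl : 2 * l ≤ T) :
    Pairwise (Function.onFun Disjoint (openArcFrom (T := T) (ι := ι) l)) := fun i j hij =>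
  disjoint_left.2 fun _ hi hj => notMem_openArc_of_mem_openArc hl (hi j hij.symm) (hj i hij)

theorem openArcFrom_subset_setOf_dist_lt (hl : 0 ≤ l) (i : ι) :
    openArcFrom (T := T) l i ⊆ {z : ι → AddCircle T | ∀ j k, j ≠ k → dist (z j) (z k) < l} := by
  have hclosed : ∀ z ∈ openArcFrom (T := T) l i, ∀ j, z j ∈ closedArc (z i) l := fun z hz j => by
    rcases eq_or_ne j i with rfl | hj
    · exact self_mem_closedArc _ hl
    · exact openArc_subset_closedArc _ _ (hz j hj)
  intro z hz j k hjk
  rcases eq_or_ne k i with rfl | hk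
  · rw [dist_comm]
    exact dist_lt_of_mem_closedArc_of_mem_openArc (hclosed z hz k) (hz j hjk)
  · exact dist_lt_of_mem_closedArc_of_mem_openArc (hclosed z hz j) (hz k hk)

variable [Finite ι] [Nonempty ι]

theorem setOf_exists_forall_mem_closedArc_eq_iUnion (hl : 0 ≤ l) :
    {z : ι → AddCircle T | ∃ a, ∀ k, z k ∈ closedArc a l} = ⋃ i, closedArcFrom l i := by
  ext z
  simp only [mem_ofPred_eq, mem_iUnion]
  constructor
  · rintro ⟨a, h⟩
    obtain ⟨i, hi⟩ := exists_forall_mem_closedArc_of_forall_mem_closedArc h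
    exact ⟨i, fun j _ => hi j⟩
  · rintro ⟨i, hi⟩
    refine ⟨z i, fun j => ?_⟩
    rcases eq_or_ne j i with rfl | hj
    · exact self_mem_closedArc _ hl
    · exact hi j hj

theorem setOf_dist_lt_subset_iUnion_closedArcFrom (hl0 : 0 < l) (hl : 3 * l ≤ T) :
    {z : ι → AddCircle T | ∀ j k, j ≠ k → dist (z j) (z k) < l} ⊆ ⋃ i, closedArcFrom l i :=
  fun _ hz =>
    let ⟨i, hi⟩ := exists_forall_mem_closedArc_of_dist_lt hl0 hl hz
    mem_iUnion.2 ⟨i, fun j _ => hi j⟩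

theorem measurableSet_setOf_exists_forall_mem_closedArc (hl : 0 ≤ l) :
    MeasurableSet {z : ι → AddCircle T | ∃ a, ∀ k, z k ∈ closedArc a l} := by
  rw [setOf_exists_forall_mem_closedArc_eq_iUnion hl]
  exact .iUnion (measurableSet_closedArcFrom l)

end

section

variable {T : ℝ} [hT : Fact (0 < T)] {l : ℝ}

theorem haarAddCircle_apply (s : Set (AddCircle T)) :
    haarAddCircle s = volume s / ENNReal.ofReal T := by
  rw [volume_eq_smul_haarAddCircle, Measure.smul_apply, smul_eq_mul,
    ENNReal.eq_div_iff (by simpa using hT.out) ENNReal.ofReal_ne_top]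

theorem haarAddCircle_closedArc (a : AddCircle T) (hl : l ≤ T) :
    haarAddCircle (closedArc a l) = ENNReal.ofReal (l / T) := by
  rw [haarAddCircle_apply, closedArc, volume_closedBall, mul_div_cancel₀ l two_ne_zero,
    min_eq_right hl, ENNReal.ofReal_div_of_pos hT.out]

theorem haarAddCircle_openArc (a : AddCircle T) (hl : l ≤ T) :
    haarAddCircle (openArc a l) = ENNReal.ofReal (l / T) := by
  rw [← haarAddCircle_closedArc a hl, haarAddCircle_apply, haarAddCircle_apply, openArc,
    closedArc, measure_congr closedBall_ae_eq_ball]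

variable {n : ℕ}

theorem measure_openArcFrom (hl : l ≤ T) (i : Fin (n + 1)) :
    Measure.pi (fun _ => haarAddCircle (T := T)) (openArcFrom l i) = ENNReal.ofReal (l / T) ^ n :=
  measure_pi_forall_ne_mem _ i (B := fun a => openArc a l)
    (by simp only [openArc, mem_ball]; exact measurableSet_lt (by fun_prop) (by fun_prop))
    fun a => haarAddCircle_openArc a hl

theorem measure_closedArcFrom (hl : l ≤ T) (i : Fin (n + 1)) :
    Measure.pi (fun _ => haarAddCircle (T := T)) (closedArcFrom l i) =
      ENNReal.ofReal (l / T) ^ n :=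
  measure_pi_forall_ne_mem _ i (B := fun a => closedArc a l)
    (by simp only [closedArc, mem_closedBall]; exact measurableSet_le (by fun_prop) (by fun_prop))
    fun a => haarAddCircle_closedArc a hl

theorem measure_iUnion_openArcFrom (hl : 2 * l ≤ T) :
    Measure.pi (fun _ => haarAddCircle (T := T)) (⋃ i : Fin (n + 1), openArcFrom l i) =
      (n + 1 : ℕ) * ENNReal.ofReal (l / T) ^ n := by
  rw [measure_iUnion (pairwise_disjoint_openArcFrom hl) (measurableSet_openArcFrom l),
    tsum_fintype]
  simp only [measure_openArcFrom (by linarith [hT.out] : l ≤ T), Finset.sum_const,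
    Finset.card_univ, Fintype.card_fin, nsmul_eq_mul]

theorem measure_iUnion_closedArcFrom (hl : 2 * l ≤ T) :
    Measure.pi (fun _ => haarAddCircle (T := T)) (⋃ i : Fin (n + 1), closedArcFrom l i) =
      (n + 1 : ℕ) * ENNReal.ofReal (l / T) ^ n := by
  refine le_antisymm ?_ ?_
  · calc _ ≤ ∑ i : Fin (n + 1), Measure.pi (fun _ => haarAddCircle (T := T)) (closedArcFrom l i) :=
          measure_iUnion_fintype_le _ _
      _ = (n + 1 : ℕ) * ENNReal.ofReal (l / T) ^ n := by
          simp only [measure_closedArcFrom (by linarith [hT.out] : l ≤ T), Finset.sum_const,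
            Finset.card_univ, Fintype.card_fin, nsmul_eq_mul]
  · rw [← measure_iUnion_openArcFrom hl]
    exact measure_mono (iUnion_mono fun i => openArcFrom_subset_closedArcFrom l i)

theorem measure_setOf_exists_forall_mem_closedArc (hl0 : 0 ≤ l) (hl : 2 * l ≤ T) :
    Measure.pi (fun _ => haarAddCircle)
        {z : Fin (n + 1) → AddCircle T | ∃ a, ∀ k, z k ∈ closedArc a l} =
      (n + 1 : ℕ) * ENNReal.ofReal (l / T) ^ n := by
  rw [setOf_exists_forall_mem_closedArc_eq_iUnion hl0, measure_iUnion_closedArcFrom hl]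

theorem measure_setOf_dist_lt (hl0 : 0 < l) (hl : 3 * l ≤ T) :
    Measure.pi (fun _ => haarAddCircle)
        {z : Fin (n + 1) → AddCircle T | ∀ j k, j ≠ k → dist (z j) (z k) < l} =
      (n + 1 : ℕ) * ENNReal.ofReal (l / T) ^ n := by
  refine le_antisymm ?_ ?_
  · rw [← measure_iUnion_closedArcFrom (by linarith)]
    exact measure_mono (setOf_dist_lt_subset_iUnion_closedArcFrom hl0 hl)
  · rw [← measure_iUnion_openArcFrom (by linarith)]
    exact measure_mono (iUnion_subset fun i => openArcFrom_subset_setOf_dist_lt hl0.le i)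

end

end AddCircle

instance fact_two_pi_pos : Fact (0 < 2 * π) := ⟨two_pi_pos⟩

noncomputable def doubledAngles {ι : Type*} (θ : ι → ℝ) : ι → AddCircle (2 * π) :=
  fun i => ((2 * θ i : ℝ) : AddCircle (2 * π))

theorem measurePreserving_coe_two_mul_unifAngle :
    MeasurePreserving (fun x : ℝ => ((2 * x : ℝ) : AddCircle (2 * π))) unifAngle
      AddCircle.haarAddCircle := by
  have hIoc : unifAngle = ENNReal.ofReal (1 / (2 * π)) • volume.restrict (Ioc 0 (0 + 2 * π)) := by
    rw [unifAngle, zero_add, Measure.restrict_congr_set Ioc_ae_eq_Icc]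
  have hhaar : AddCircle.haarAddCircle =
      ENNReal.ofReal (1 / (2 * π)) • (volume : Measure (AddCircle (2 * π))) := by
    rw [AddCircle.volume_eq_smul_haarAddCircle, smul_smul, ← ENNReal.ofReal_mul (by positivity),
      one_div_mul_cancel two_pi_pos.ne', ENNReal.ofReal_one, one_smul]
  have hdouble := (Measure.measurePreserving_zsmul volume (two_ne_zero : (2 : ℤ) ≠ 0)).comp
    (AddCircle.measurePreserving_mk (2 * π) 0)
  have hfun : ((fun z : AddCircle (2 * π) => (2 : ℤ) • z) ∘ ((↑) : ℝ → AddCircle (2 * π))) =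
      fun x : ℝ => ((2 * x : ℝ) : AddCircle (2 * π)) := by
    funext x
    simp [← AddCircle.coe_zsmul]
  rw [hfun] at hdouble
  rw [hIoc, hhaar]
  exact ⟨hdouble.measurable, by rw [Measure.map_smul, hdouble.map_eq]⟩

theorem measurePreserving_doubledAngles {ι : Type*} [Fintype ι] :
    MeasurePreserving (doubledAngles (ι := ι)) (Measure.pi fun _ => unifAngle)
      (Measure.pi fun _ => AddCircle.haarAddCircle) :=
  measurePreserving_pi _ _ fun _ => measurePreserving_coe_two_mul_unifAngle

theorem setOf_forall_norm_sub_notMem_Icc_eq_preimage {ι : Type*} (δ : ℝ) :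
    {θ : ι → ℝ | ∀ i j, i ≠ j →
        ‖((θ i - θ j : ℝ) : AddCircle (2 * π))‖ ∉ Icc (π / 2 - δ) (π / 2 + δ)} =
      doubledAngles ⁻¹' {z | ∀ i j, i ≠ j → dist (z i) (z j) < π - 2 * δ} := by
  have h := AddCircle.norm_notMem_Icc_iff_norm_coe_two_mul_lt (T := 2 * π) (δ := δ)
  rw [show 2 * π / 4 = π / 2 by ring, show 2 * π / 2 = π by ring] at h
  ext θ
  simp only [mem_preimage, mem_ofPred_eq, doubledAngles, dist_eq_norm, ← AddCircle.coe_sub,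
    ← mul_sub, h]

theorem setOf_exists_forall_coe_two_mul_eq_preimage {ι : Type*} (l : ℝ) :
    {θ : ι → ℝ | ∃ a : ℝ, ∀ k, ∃ t ∈ Icc 0 l,
        ((2 * θ k : ℝ) : AddCircle (2 * π)) = ((a + t : ℝ) : AddCircle (2 * π))} =
      doubledAngles ⁻¹' {z | ∃ a, ∀ k, z k ∈ AddCircle.closedArc a l} := by
  ext θ
  simp only [mem_preimage, mem_ofPred_eq, doubledAngles, AddCircle.mem_closedArc_iff,
    AddCircle.coe_add]
  refine ⟨fun ⟨a, h⟩ => ⟨a, h⟩, fun ⟨a, h⟩ => ?_⟩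
  obtain ⟨a, rfl⟩ := QuotientAddGroup.mk_surjective a
  exact ⟨a, h⟩

/-- For N ≥ 2 i.i.d. directions uniform on [0, 2π) and π/6 ≤ δ < π/2, the probability
N((π−2δ)/(2π))^{N−1} that all pairwise included angles (shorter circular distances)
avoid [π/2−δ, π/2+δ] equals the probability that all doubled angles θ'ₙ = 2θₙ (mod 2π)
lie in a common closed arc of length π − 2δ. -/
theorem stmt_19 (N : ℕ) (hN : 2 ≤ N) (δ : ℝ) (hδ1 : π / 6 ≤ δ) (hδ2 : δ < π / 2) :
    ((Measure.pi fun _ : Fin N => unifAngle)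
      {θ : Fin N → ℝ | ∀ i j, i ≠ j →
        ‖((θ i - θ j : ℝ) : AddCircle (2 * π))‖ ∉ Set.Icc (π / 2 - δ) (π / 2 + δ)}).toReal
      = N * ((π - 2 * δ) / (2 * π)) ^ (N - 1)
    ∧ ((Measure.pi fun _ : Fin N => unifAngle)
      {θ : Fin N → ℝ | ∃ a : ℝ, ∀ n, ∃ t ∈ Set.Icc (0:ℝ) (π - 2 * δ),
        ((2 * θ n : ℝ) : AddCircle (2 * π)) = ((a + t : ℝ) : AddCircle (2 * π))}).toReal
      = N * ((π - 2 * δ) / (2 * π)) ^ (N - 1) := by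
  obtain ⟨n, rfl⟩ : ∃ n, N = n + 1 := ⟨N - 1, by omega⟩
  have hl0 : 0 < π - 2 * δ := by linarith
  have hl : 3 * (π - 2 * δ) ≤ 2 * π := by linarith
  have htoReal : (((n + 1 : ℕ) : ℝ≥0∞) * ENNReal.ofReal ((π - 2 * δ) / (2 * π)) ^ n).toReal =
      ((n + 1 : ℕ) : ℝ) * ((π - 2 * δ) / (2 * π)) ^ (n + 1 - 1) := by
    rw [ENNReal.toReal_mul, ENNReal.toReal_pow, ENNReal.toReal_natCast,
      ENNReal.toReal_ofReal (by positivity), Nat.add_sub_cancel]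
  rw [setOf_forall_norm_sub_notMem_Icc_eq_preimage, setOf_exists_forall_coe_two_mul_eq_preimage,
    measurePreserving_doubledAngles.measure_preimage
      (AddCircle.measurableSet_setOf_dist_lt _).nullMeasurableSet,
    measurePreserving_doubledAngles.measure_preimage
      (AddCircle.measurableSet_setOf_exists_forall_mem_closedArc hl0.le).nullMeasurableSet,
    AddCircle.measure_setOf_dist_lt hl0 hl,
    AddCircle.measure_setOf_exists_forall_mem_closedArc hl0.le (by linarith)]
  exact ⟨htoReal, htoReal⟩
end
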